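/- Let Δ be a matroid of rank d on [n] with [d] a basis, and let I ⊆ [n] \ [d] be independent. Then the number of bases B of Δ with B \ [d] = I equals the number of bases of Γ_I, and consequently h_j(Γ_I) is at most the number of monomials of degree j in |I| variables, i.e., h_j(Γ_I) ≤ C(|I| + j − 1, j). -/

import Mathlib

/-- A matroid independence system on ground set `Finset.range n`. -/
def IsMatroidOn (n : ℕ) (Indep : Finset ℕ → Prop) : Prop :=
  Indep ∅ ∧
  (∀ I, Indep I → I ⊆ Finset.range n) ∧
  (∀ I J, I ⊆ J → Indep J → Indep I) ∧
  (∀ I J, Indep I → Indep J → I.card < J.card → ∃ v ∈ J \ I, Indep (insert v I))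

/-- `B` is a basis: a maximal independent set. -/
def IsBasisOf (Indep : Finset ℕ → Prop) (B : Finset ℕ) : Prop :=
  Indep B ∧ ∀ C, Indep C → B ⊆ C → C = B

/-- Lexicographic order on finite subsets of ℕ: the smallest element where the
two sets differ belongs to the smaller set. -/
def lexLt (A B : Finset ℕ) : Prop :=
  ∃ m, m ∈ A ∧ m ∉ B ∧ ∀ k, k < m → (k ∈ A ↔ k ∈ B)

/-- Restriction set of a basis `B` in the lexicographic shelling:
`R(B) = {x ∈ B : (B \ {x}) ∪ {y} is a basis for some y < x}`. -/
noncomputable def restrSet (Indep : Finset ℕ → Prop) (B : Finset ℕ) : Finset ℕ :=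
  @Finset.filter _ (fun x => ∃ y, y < x ∧ IsBasisOf Indep (insert y (B.erase x)))
    (Classical.decPred _) B

/-- The finite set of bases of a matroid on ground set `Finset.range n`. -/
noncomputable def basesOf (Indep : Finset ℕ → Prop) (n : ℕ) : Finset (Finset ℕ) :=
  @Finset.filter _ (IsBasisOf Indep) (Classical.decPred _) (Finset.range n).powerset

/-- The number of bases. -/
noncomputable def numBases (Indep : Finset ℕ → Prop) (n : ℕ) : ℕ := (basesOf Indep n).card

/-- The `i`-th entry of the h-vector: the number of bases whose restriction set
in the lexicographic shelling has cardinality `i`. -/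
noncomputable def hVec (Indep : Finset ℕ → Prop) (n i : ℕ) : ℕ :=
  (@Finset.filter _ (fun B => (restrSet Indep B).card = i) (Classical.decPred _)
    (basesOf Indep n)).card

/-- The independence predicate of the matroid `Γ_I` on ground set `Finset.range d`:
`G` is independent iff `G ⊆ [d]` and `G ∪ I` is independent in the ambient matroid. -/
def GammaIndep (Indep : Finset ℕ → Prop) (d : ℕ) (I : Finset ℕ) : Finset ℕ → Prop :=
  fun G => G ⊆ Finset.range d ∧ Indep (G ∪ I)

/-!
Deleting or contracting the largest element `m` of the ground set is compatible with the
lexicographic restriction sets: a basis avoiding `m` has the same restriction set in `Δ \ m`, and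
for a basis `B ∋ m` the restriction set of `B - m` in `Δ / m` is that of `B` minus `m`, where
`m` lies in the restriction set of `B` exactly when `m` is not a coloop. So if `m` is neither a
loop nor a coloop then `h_{j+1}(Δ) = h_{j+1}(Δ \ m) + h_j(Δ / m)`, which is Pascal's rule for
`multichoose`, and induction on the ground set gives `h_j ≤ multichoose (n - r) j` for every
matroid of rank `r` on `n` elements. The bases of `Γ_I` are the traces `B ∩ [d]` of the bases `B`
of `Δ` with `B \ [d] = I`, so `Γ_I` has rank `d - |I|` on `d` elements.
-/

open Finset

namespace IsMatroidOn

variable {n : ℕ} {Indep : Finset ℕ → Prop} {B B' J : Finset ℕ}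

theorem subset_range (hM : IsMatroidOn n Indep) (hJ : Indep J) : J ⊆ range n := hM.2.1 J hJ

theorem indep_of_subset (hM : IsMatroidOn n Indep) (hBJ : B ⊆ J) (hJ : Indep J) : Indep B :=
  hM.2.2.1 B J hBJ hJ

theorem exists_insert_of_card_lt (hM : IsMatroidOn n Indep) (hB : Indep B) (hJ : Indep J)
    (h : #B < #J) : ∃ v ∈ J \ B, Indep (insert v B) :=
  hM.2.2.2 B J hB hJ h

theorem card_le_of_isBasisOf (hM : IsMatroidOn n Indep) (hB : IsBasisOf Indep B)
    (hJ : Indep J) : #J ≤ #B := by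
  by_contra! h
  obtain ⟨v, hv, hvB⟩ := hM.exists_insert_of_card_lt hB.1 hJ h
  exact (mem_sdiff.mp hv).2 (hB.2 _ hvB (subset_insert v B) ▸ mem_insert_self v B)

theorem isBasisOf_of_card_le (hM : IsMatroidOn n Indep) (hB : IsBasisOf Indep B)
    (hJ : Indep J) (h : #B ≤ #J) : IsBasisOf Indep J :=
  ⟨hJ, fun _ hC hJC =>
    (eq_of_subset_of_card_le hJC ((hM.card_le_of_isBasisOf hB hC).trans h)).symm⟩

theorem card_eq_of_isBasisOf (hM : IsMatroidOn n Indep) (hB : IsBasisOf Indep B)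
    (hB' : IsBasisOf Indep B') : #B = #B' :=
  (hM.card_le_of_isBasisOf hB' hB.1).antisymm (hM.card_le_of_isBasisOf hB hB'.1)

theorem exists_isBasisOf_superset (hM : IsMatroidOn n Indep) (hJ : Indep J) :
    ∃ B, J ⊆ B ∧ IsBasisOf Indep B := by
  classical
  obtain ⟨B, hB, hmax⟩ := exists_max_image
    ((range n).powerset.filter fun C => J ⊆ C ∧ Indep C) card
    ⟨J, by simpa [hJ] using hM.subset_range hJ⟩
  simp only [mem_filter, mem_powerset] at hB hmax
  refine ⟨B, hB.2.1, hB.2.2, fun C hC hBC => ?_⟩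
  exact (eq_of_subset_of_card_le hBC
    (hmax C ⟨hM.subset_range hC, hB.2.1.trans hBC, hC⟩)).symm

theorem exists_isBasisOf (hM : IsMatroidOn n Indep) : ∃ B, IsBasisOf Indep B :=
  (hM.exists_isBasisOf_superset hM.1).imp fun _ => And.right

theorem mem_basesOf_iff (hM : IsMatroidOn n Indep) :
    B ∈ basesOf Indep n ↔ IsBasisOf Indep B := by
  simp only [basesOf, mem_filter, mem_powerset, and_iff_right_iff_imp]
  exact fun hB => hM.subset_range hB.1

end IsMatroidOn

theorem mem_restrSet {Indep : Finset ℕ → Prop} {B : Finset ℕ} {x : ℕ} :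
    x ∈ restrSet Indep B ↔ x ∈ B ∧ ∃ y < x, IsBasisOf Indep (insert y (B.erase x)) := by
  simp [restrSet]

-- Trades the `Classical.decPred` instance in `hVec` for the decidable equality of `ℕ`.
theorem hVec_eq_card_filter {Indep : Finset ℕ → Prop} {n j : ℕ} :
    hVec Indep n j = #((basesOf Indep n).filter fun B => #(restrSet Indep B) = j) := by
  unfold hVec
  congr

def deletion (Indep : Finset ℕ → Prop) (m : ℕ) : Finset ℕ → Prop :=
  fun J => Indep J ∧ m ∉ J

def contraction (Indep : Finset ℕ → Prop) (m : ℕ) : Finset ℕ → Prop :=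
  fun J => m ∉ J ∧ Indep (insert m J)

section TopElement

variable {m : ℕ} {Indep : Finset ℕ → Prop} {B B₁ G S : Finset ℕ}

theorem subset_range_of_notMem {J : Finset ℕ} (hJ : J ⊆ range (m + 1)) (hmJ : m ∉ J) :
    J ⊆ range m :=
  (subset_insert_iff_of_notMem hmJ).mp (range_add_one ▸ hJ)

theorem IsMatroidOn.deletion (hM : IsMatroidOn (m + 1) Indep) :
    IsMatroidOn m (deletion Indep m) := by
  obtain ⟨h0, hground, hdown, hexch⟩ := hM
  refine ⟨⟨h0, notMem_empty m⟩, fun J hJ => subset_range_of_notMem (hground J hJ.1) hJ.2,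
    fun A C hAC hC => ⟨hdown A C hAC hC.1, fun h => hC.2 (hAC h)⟩, ?_⟩
  intro A C hA hC hcard
  obtain ⟨v, hv, hvA⟩ := hexch A C hA.1 hC.1 hcard
  refine ⟨v, hv, hvA, ?_⟩
  rw [mem_insert, not_or]
  exact ⟨fun h => hC.2 (h ▸ (mem_sdiff.mp hv).1), hA.2⟩

theorem IsMatroidOn.contraction (hM : IsMatroidOn (m + 1) Indep) (hm : Indep {m}) :
    IsMatroidOn m (contraction Indep m) := by
  obtain ⟨-, hground, hdown, hexch⟩ := hM
  refine ⟨⟨notMem_empty m, hm⟩,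
    fun J hJ => subset_range_of_notMem ((subset_insert m J).trans (hground _ hJ.2)) hJ.1,
    fun A C hAC hC => ⟨fun h => hC.1 (hAC h), hdown _ _ (insert_subset_insert m hAC) hC.2⟩, ?_⟩
  intro A C hA hC hcard
  obtain ⟨v, hv, hvA⟩ := hexch _ _ hA.2 hC.2 (by
    rw [card_insert_of_notMem hA.1, card_insert_of_notMem hC.1]; omega)
  simp only [mem_sdiff, mem_insert, not_or] at hv
  obtain ⟨rfl | hvC, hvm, hvnA⟩ := hv
  · exact absurd rfl hvm
  · refine ⟨v, mem_sdiff.mpr ⟨hvC, hvnA⟩, ?_, by rwa [insert_comm]⟩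
    rw [mem_insert, not_or]
    exact ⟨Ne.symm hvm, hA.1⟩

theorem isBasisOf_contraction_iff (hmG : m ∉ G) :
    IsBasisOf (contraction Indep m) G ↔ IsBasisOf Indep (insert m G) := by
  constructor
  · rintro ⟨⟨-, hG⟩, hmax⟩
    refine ⟨hG, fun C hC hGC => ?_⟩
    have hmC : m ∈ C := hGC (mem_insert_self m G)
    have hCm : contraction Indep m (C.erase m) := ⟨notMem_erase m C, by rwa [insert_erase hmC]⟩
    rw [← insert_erase hmC,
      hmax _ hCm (subset_erase.mpr ⟨(subset_insert m G).trans hGC, hmG⟩)]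
  · rintro ⟨hG, hmax⟩
    refine ⟨⟨hmG, hG⟩, fun C hC hGC => ?_⟩
    rw [← erase_insert hC.1, hmax _ hC.2 (insert_subset_insert m hGC), erase_insert hmG]

theorem isBasisOf_contraction_erase (hB : IsBasisOf Indep B) (hmB : m ∈ B) :
    IsBasisOf (contraction Indep m) (B.erase m) := by
  rwa [isBasisOf_contraction_iff (notMem_erase m B), insert_erase hmB]

theorem isBasisOf_deletion_iff (hM : IsMatroidOn (m + 1) Indep) (hB₁ : IsBasisOf Indep B₁)
    (hmB₁ : m ∉ B₁) (hmS : m ∉ S) :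
    IsBasisOf (deletion Indep m) S ↔ IsBasisOf Indep S := by
  have hB₁' : IsBasisOf (deletion Indep m) B₁ := ⟨⟨hB₁.1, hmB₁⟩, fun C hC => hB₁.2 C hC.1⟩
  refine ⟨fun hS => hM.isBasisOf_of_card_le hB₁ hS.1.1 ?_,
    fun hS => ⟨⟨hS.1, hmS⟩, fun C hC => hS.2 C hC.1⟩⟩
  exact (hM.deletion.card_eq_of_isBasisOf hB₁' hS).le

theorem restrSet_deletion (hM : IsMatroidOn (m + 1) Indep) (hB₁ : IsBasisOf Indep B₁)
    (hmB₁ : m ∉ B₁) (hB : Indep B) (hmB : m ∉ B) :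
    restrSet (deletion Indep m) B = restrSet Indep B := by
  ext x
  simp only [mem_restrSet]
  refine and_congr_right fun hxB => exists_congr fun y => and_congr_right fun hyx => ?_
  have hxm : x < m := mem_range.mp (subset_range_of_notMem (hM.subset_range hB) hmB hxB)
  refine isBasisOf_deletion_iff hM hB₁ hmB₁ ?_
  simp only [mem_insert, mem_erase, not_or]
  exact ⟨by omega, fun h => hmB h.2⟩

theorem restrSet_contraction (hM : IsMatroidOn (m + 1) Indep) (hG : Indep (insert m G))
    (hmG : m ∉ G) :
    restrSet (contraction Indep m) G = (restrSet Indep (insert m G)).erase m := by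
  ext x
  simp only [mem_erase, mem_restrSet]
  by_cases hxG : x ∈ G
  · have hxm : x ≠ m := fun h => hmG (h ▸ hxG)
    have hxlt : x < m := by
      have := mem_range.mp (hM.subset_range hG (mem_insert_of_mem hxG))
      omega
    simp only [hxG, hxm, mem_insert_of_mem, ne_eq, not_false_eq_true, true_and]
    refine exists_congr fun y => and_congr_right fun hyx => ?_
    have hmZ : m ∉ insert y (G.erase x) := by
      simp only [mem_insert, mem_erase, not_or]
      exact ⟨by omega, fun h => hmG h.2⟩
    rw [isBasisOf_contraction_iff hmZ, insert_comm, erase_insert_of_ne (Ne.symm hxm)]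
  · simp only [hxG, mem_insert, or_false, false_and, false_iff, not_and]
    exact fun hxm hxm' => absurd hxm' hxm

theorem top_mem_restrSet_iff (hM : IsMatroidOn (m + 1) Indep) (hB : IsBasisOf Indep B)
    (hmB : m ∈ B) : m ∈ restrSet Indep B ↔ ∃ B₁, IsBasisOf Indep B₁ ∧ m ∉ B₁ := by
  refine ⟨fun h => ?_, fun ⟨B₁, hB₁, hmB₁⟩ => ?_⟩
  · obtain ⟨-, y, hym, hyB⟩ := mem_restrSet.mp h
    refine ⟨_, hyB, ?_⟩
    simp only [mem_insert, mem_erase, not_or]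
    exact ⟨by omega, fun h => h.1 rfl⟩
  · have hcard : #B = #B₁ := hM.card_eq_of_isBasisOf hB hB₁
    have hlt : #(B.erase m) < #B₁ := by
      rw [card_erase_of_mem hmB]
      have := card_pos.mpr ⟨m, hmB⟩
      omega
    obtain ⟨v, hv, hvB⟩ :=
      hM.exists_insert_of_card_lt (hM.indep_of_subset (erase_subset m B) hB.1) hB₁.1 hlt
    rw [mem_sdiff] at hv
    have hvm : v < m := mem_range.mp (subset_range_of_notMem (hM.subset_range hB₁.1) hmB₁ hv.1)
    refine mem_restrSet.mpr ⟨hmB, v, hvm, hM.isBasisOf_of_card_le hB hvB ?_⟩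
    rw [card_insert_of_notMem hv.2, card_erase_of_mem hmB]
    omega

theorem filter_basesOf_notMem (hM : IsMatroidOn (m + 1) Indep) (hB₁ : IsBasisOf Indep B₁)
    (hmB₁ : m ∉ B₁) : (basesOf Indep (m + 1)).filter (m ∉ ·) = basesOf (deletion Indep m) m := by
  ext B
  rw [mem_filter, hM.mem_basesOf_iff, hM.deletion.mem_basesOf_iff]
  exact ⟨fun ⟨hB, hmB⟩ => (isBasisOf_deletion_iff hM hB₁ hmB₁ hmB).mpr hB,
    fun hB => ⟨(isBasisOf_deletion_iff hM hB₁ hmB₁ hB.1.2).mp hB, hB.1.2⟩⟩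

theorem card_filter_basesOf_mem (hM : IsMatroidOn (m + 1) Indep) (hm : Indep {m})
    (p : Finset ℕ → Prop) [DecidablePred p] :
    #((basesOf Indep (m + 1)).filter fun B => p B ∧ m ∈ B) =
      #((basesOf (contraction Indep m) m).filter fun G => p (insert m G)) := by
  refine card_nbij' (·.erase m) (insert m) ?_ ?_ ?_ ?_
  · intro B hB
    simp only [mem_coe, mem_filter, hM.mem_basesOf_iff,
      (hM.contraction hm).mem_basesOf_iff] at hB ⊢
    rw [insert_erase hB.2.2]
    exact ⟨isBasisOf_contraction_erase hB.1 hB.2.2, hB.2.1⟩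
  · intro G hG
    simp only [mem_coe, mem_filter, hM.mem_basesOf_iff,
      (hM.contraction hm).mem_basesOf_iff] at hG ⊢
    exact ⟨(isBasisOf_contraction_iff hG.1.1.1).mp hG.1, hG.2, mem_insert_self m G⟩
  · intro B hB
    exact insert_erase (mem_filter.mp hB).2.2
  · intro G hG
    exact erase_insert ((hM.contraction hm).mem_basesOf_iff.mp (mem_filter.mp hG).1).1.1

theorem hVec_succ_eq_add (hM : IsMatroidOn (m + 1) Indep) (hB₁ : IsBasisOf Indep B₁)
    (hmB₁ : m ∉ B₁) (j : ℕ) :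
    hVec Indep (m + 1) j = hVec (deletion Indep m) m j +
      #((basesOf Indep (m + 1)).filter fun B => #(restrSet Indep B) = j ∧ m ∈ B) := by
  have hdel : #((basesOf Indep (m + 1)).filter fun B => #(restrSet Indep B) = j ∧ m ∉ B) =
      hVec (deletion Indep m) m j := by
    rw [hVec_eq_card_filter, ← filter_basesOf_notMem hM hB₁ hmB₁, filter_filter]
    refine congrArg card (filter_congr fun B hB => ?_)
    rw [and_comm, and_congr_right_iff]
    intro hmB
    rw [restrSet_deletion hM hB₁ hmB₁ ((hM.mem_basesOf_iff.mp hB).1) hmB]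
  rw [← hdel, hVec_eq_card_filter, ← card_filter_add_card_filter_not
    (s := (basesOf Indep (m + 1)).filter fun B => #(restrSet Indep B) = j) (fun B => m ∉ B)]
  simp only [filter_filter, not_not]

theorem hVec_succ_of_loop (hM : IsMatroidOn (m + 1) Indep) (hm : ¬Indep {m}) (j : ℕ) :
    hVec Indep (m + 1) j = hVec (deletion Indep m) m j := by
  have hloop : ∀ B, Indep B → m ∉ B := fun B hB hmB =>
    hm (hM.indep_of_subset (singleton_subset_iff.mpr hmB) hB)
  obtain ⟨B₀, hB₀⟩ := hM.exists_isBasisOf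
  rw [hVec_succ_eq_add hM hB₀ (hloop B₀ hB₀.1), add_eq_left, card_eq_zero,
    filter_eq_empty_iff]
  exact fun B hB h => hloop B (hM.mem_basesOf_iff.mp hB).1 h.2

theorem hVec_succ_zero (hM : IsMatroidOn (m + 1) Indep) (hB₁ : IsBasisOf Indep B₁)
    (hmB₁ : m ∉ B₁) : hVec Indep (m + 1) 0 = hVec (deletion Indep m) m 0 := by
  rw [hVec_succ_eq_add hM hB₁ hmB₁, add_eq_left, card_eq_zero, filter_eq_empty_iff]
  rintro B hB ⟨hR, hmB⟩
  have := (top_mem_restrSet_iff hM (hM.mem_basesOf_iff.mp hB) hmB).mpr ⟨B₁, hB₁, hmB₁⟩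
  rw [card_eq_zero.mp hR] at this
  exact notMem_empty m this

theorem hVec_succ_succ (hM : IsMatroidOn (m + 1) Indep) (hm : Indep {m})
    (hB₁ : IsBasisOf Indep B₁) (hmB₁ : m ∉ B₁) (j : ℕ) :
    hVec Indep (m + 1) (j + 1) =
      hVec (deletion Indep m) m (j + 1) + hVec (contraction Indep m) m j := by
  have hR : ∀ G ∈ basesOf (contraction Indep m) m,
      #(restrSet Indep (insert m G)) = #(restrSet (contraction Indep m) G) + 1 := by
    intro G hG
    have hG := (hM.contraction hm).mem_basesOf_iff.mp hG
    have hmR := (top_mem_restrSet_iff hM ((isBasisOf_contraction_iff hG.1.1).mp hG)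
      (mem_insert_self m G)).mpr ⟨B₁, hB₁, hmB₁⟩
    rw [restrSet_contraction hM hG.1.2 hG.1.1, card_erase_add_one hmR]
  rw [hVec_succ_eq_add hM hB₁ hmB₁, card_filter_basesOf_mem hM hm
    (fun B => #(restrSet Indep B) = j + 1), hVec_eq_card_filter (Indep := contraction Indep m)]
  congr 2
  exact filter_congr fun G hG => by rw [hR G hG, add_left_inj]

theorem hVec_succ_of_coloop (hM : IsMatroidOn (m + 1) Indep)
    (hco : ∀ B, IsBasisOf Indep B → m ∈ B) (j : ℕ) :
    hVec Indep (m + 1) j = hVec (contraction Indep m) m j := by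
  obtain ⟨B₀, hB₀⟩ := hM.exists_isBasisOf
  have hm : Indep {m} := hM.indep_of_subset (singleton_subset_iff.mpr (hco B₀ hB₀)) hB₀.1
  have hR : ∀ G ∈ basesOf (contraction Indep m) m,
      restrSet Indep (insert m G) = restrSet (contraction Indep m) G := by
    intro G hG
    have hG := (hM.contraction hm).mem_basesOf_iff.mp hG
    have hmR : m ∉ restrSet Indep (insert m G) := fun h => by
      obtain ⟨B₁, hB₁, hmB₁⟩ := (top_mem_restrSet_iff hM
        ((isBasisOf_contraction_iff hG.1.1).mp hG) (mem_insert_self m G)).mp h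
      exact hmB₁ (hco B₁ hB₁)
    rw [restrSet_contraction hM hG.1.2 hG.1.1, erase_eq_of_notMem hmR]
  rw [hVec_eq_card_filter, hVec_eq_card_filter]
  calc _ = #((basesOf Indep (m + 1)).filter fun B => #(restrSet Indep B) = j ∧ m ∈ B) :=
        congrArg card (filter_congr fun B hB => by
          simp [hco B (hM.mem_basesOf_iff.mp hB)])
    _ = #((basesOf (contraction Indep m) m).filter
          fun G => #(restrSet Indep (insert m G)) = j) :=
        card_filter_basesOf_mem hM hm (fun B => #(restrSet Indep B) = j)
    _ = _ := congrArg card (filter_congr fun G hG => by rw [hR G hG])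

end TopElement

theorem multichoose_le_multichoose_succ (k j : ℕ) : k.multichoose j ≤ (k + 1).multichoose j := by
  cases j with
  | zero => simp
  | succ j => exact (Nat.multichoose_succ_succ k j).symm ▸ Nat.le_add_right _ _

theorem hVec_zero_le_multichoose (Indep : Finset ℕ → Prop) (j : ℕ) :
    hVec Indep 0 j ≤ (0 : ℕ).multichoose j := by
  have hbases : basesOf Indep 0 ⊆ {∅} := fun B hB => by
    simp only [basesOf, range_zero, mem_filter, mem_powerset, subset_empty] at hB
    exact mem_singleton.mpr hB.1
  rw [hVec_eq_card_filter]
  cases j with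
  | zero => simpa using (card_filter_le _ _).trans (card_le_card hbases)
  | succ j =>
    rw [Nat.multichoose_zero_succ, nonpos_iff_eq_zero, card_eq_zero, filter_eq_empty_iff]
    intro B hB
    simp [mem_singleton.mp (hbases hB), restrSet]

theorem hVec_le_multichoose {n : ℕ} {Indep : Finset ℕ → Prop} {B : Finset ℕ}
    (hM : IsMatroidOn n Indep) (hB : IsBasisOf Indep B) (j : ℕ) :
    hVec Indep n j ≤ (n - #B).multichoose j := by
  induction n generalizing Indep B j with
  | zero => rw [Nat.zero_sub]; exact hVec_zero_le_multichoose Indep j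
  | succ m ih =>
    by_cases hco : ∀ B', IsBasisOf Indep B' → m ∈ B'
    · have hmB := hco B hB
      have hBm : #B ≤ m + 1 := (card_le_card (hM.subset_range hB.1)).trans (card_range _).le
      have hm : Indep {m} := hM.indep_of_subset (singleton_subset_iff.mpr hmB) hB.1
      have := ih (hM.contraction hm) (isBasisOf_contraction_erase hB hmB) j
      have hpos := card_pos.mpr ⟨m, hmB⟩
      rwa [← hVec_succ_of_coloop hM hco, card_erase_of_mem hmB,
        show m - (#B - 1) = m + 1 - #B by omega] at this
    obtain ⟨B₁, hB₁, hmB₁⟩ := not_forall₂.mp hco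
    have hB₁' : IsBasisOf (deletion Indep m) B₁ :=
      (isBasisOf_deletion_iff hM hB₁ hmB₁ hmB₁).mpr hB₁
    have hB₁m : #B₁ ≤ m :=
      (card_le_card (subset_range_of_notMem (hM.subset_range hB₁.1) hmB₁)).trans (card_range _).le
    rw [hM.card_eq_of_isBasisOf hB hB₁, show m + 1 - #B₁ = m - #B₁ + 1 by omega]
    by_cases hm : Indep {m}
    · obtain ⟨B₂, hmB₂, hB₂⟩ := hM.exists_isBasisOf_superset hm
      have hmB₂ := singleton_subset_iff.mp hmB₂
      have hcard₂ : #(B₂.erase m) = #B₁ - 1 := by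
        rw [card_erase_of_mem hmB₂, hM.card_eq_of_isBasisOf hB₂ hB₁]
      have hpos : 0 < #B₁ := hM.card_eq_of_isBasisOf hB₂ hB₁ ▸ card_pos.mpr ⟨m, hmB₂⟩
      cases j with
      | zero => simpa [hVec_succ_zero hM hB₁ hmB₁] using ih hM.deletion hB₁' 0
      | succ j =>
        have hcon := ih (hM.contraction hm) (isBasisOf_contraction_erase hB₂ hmB₂) j
        rw [hcard₂, show m - (#B₁ - 1) = m - #B₁ + 1 by omega] at hcon
        rw [hVec_succ_succ hM hm hB₁ hmB₁, Nat.multichoose_succ_succ]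
        exact add_le_add (ih hM.deletion hB₁' (j + 1)) hcon
    · rw [hVec_succ_of_loop hM hm]
      exact (ih hM.deletion hB₁' j).trans (multichoose_le_multichoose_succ _ _)

section Gamma

variable {n d : ℕ} {Indep : Finset ℕ → Prop} {I G : Finset ℕ}

theorem IsMatroidOn.gammaIndep (hM : IsMatroidOn n Indep) (hI : Indep I)
    (hdisj : Disjoint I (range d)) : IsMatroidOn d (GammaIndep Indep d I) := by
  obtain ⟨-, -, hdown, hexch⟩ := hM
  refine ⟨⟨empty_subset _, by rwa [empty_union]⟩, fun G hG => hG.1,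
    fun A C hAC hC => ⟨hAC.trans hC.1, hdown _ _ (union_subset_union_left hAC) hC.2⟩, ?_⟩
  intro A C hA hC hcard
  have hcard' : #(A ∪ I) < #(C ∪ I) := by
    rw [card_union_of_disjoint (hdisj.mono_right hA.1).symm,
      card_union_of_disjoint (hdisj.mono_right hC.1).symm]
    omega
  obtain ⟨v, hv, hvA⟩ := hexch _ _ hA.2 hC.2 hcard'
  simp only [mem_sdiff, mem_union, not_or] at hv
  obtain ⟨hvC | hvI, hvnA, hvnI⟩ := hv
  · exact ⟨v, mem_sdiff.mpr ⟨hvC, hvnA⟩, insert_subset (hC.1 hvC) hA.1,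
      by rwa [insert_union]⟩
  · exact absurd hvI hvnI

theorem isBasisOf_gammaIndep_iff (hM : IsMatroidOn n Indep)
    (hB : IsBasisOf Indep (range d)) (hdisj : Disjoint I (range d)) :
    IsBasisOf (GammaIndep Indep d I) G ↔ G ⊆ range d ∧ IsBasisOf Indep (G ∪ I) := by
  constructor
  · rintro ⟨⟨hGd, hGI⟩, hmax⟩
    refine ⟨hGd, hM.isBasisOf_of_card_le hB hGI (not_lt.mp fun hlt => ?_)⟩
    obtain ⟨v, hv, hvG⟩ := hM.exists_insert_of_card_lt hGI hB.1 hlt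
    simp only [mem_sdiff, mem_union, not_or] at hv
    have hvG' : GammaIndep Indep d I (insert v G) :=
      ⟨insert_subset hv.1 hGd, by rwa [insert_union]⟩
    exact hv.2.1 (hmax _ hvG' (subset_insert v G) ▸ mem_insert_self v G)
  · rintro ⟨hGd, hGI⟩
    refine ⟨⟨hGd, hGI.1⟩, fun C hC hGC => Subset.antisymm (fun x hx => ?_) hGC⟩
    have hCI := hGI.2 (C ∪ I) hC.2 (union_subset_union_left hGC)
    obtain hxG | hxI := mem_union.mp (hCI ▸ mem_union_left I hx)
    · exact hxG
    · exact absurd (hC.1 hx) (disjoint_left.mp hdisj hxI)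

theorem card_add_card_of_isBasisOf_gammaIndep (hM : IsMatroidOn n Indep)
    (hB : IsBasisOf Indep (range d)) (hdisj : Disjoint I (range d))
    (hG : IsBasisOf (GammaIndep Indep d I) G) : #G + #I = d := by
  obtain ⟨hGd, hGI⟩ := (isBasisOf_gammaIndep_iff hM hB hdisj).mp hG
  rw [← card_union_of_disjoint (hdisj.mono_right hGd).symm, hM.card_eq_of_isBasisOf hGI hB,
    card_range]

theorem card_filter_basesOf_sdiff_eq (hM : IsMatroidOn n Indep)
    (hB : IsBasisOf Indep (range d)) (hI : Indep I) (hdisj : Disjoint I (range d)) :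
    #((basesOf Indep n).filter fun B => B \ range d = I) =
      numBases (GammaIndep Indep d I) d := by
  have hMΓ := hM.gammaIndep hI hdisj
  have hunion : ∀ B, B \ range d = I → B ∩ range d ∪ I = B := fun B hBI =>
    hBI ▸ sup_inf_sdiff B (range d)
  have hinter : ∀ G ⊆ range d, (G ∪ I) ∩ range d = G := fun G hGd => by
    rw [union_inter_distrib_right, inter_eq_left.mpr hGd,
      disjoint_iff_inter_eq_empty.mp hdisj, union_empty]
  have hsdiff : ∀ G ⊆ range d, (G ∪ I) \ range d = I := fun G hGd => by
    rw [union_sdiff_distrib, sdiff_eq_empty_iff_subset.mpr hGd,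
      sdiff_eq_self_of_disjoint hdisj, empty_union]
  unfold numBases
  refine card_nbij' (· ∩ range d) (· ∪ I) (fun B hB' => ?_) (fun G hG' => ?_)
    (fun B hB' => hunion B (mem_filter.mp hB').2) (fun G hG' => hinter G ?_)
  · obtain ⟨hBb, hBI⟩ := mem_filter.mp hB'
    rw [mem_coe, hMΓ.mem_basesOf_iff, isBasisOf_gammaIndep_iff hM hB hdisj, hunion B hBI]
    exact ⟨inter_subset_right, hM.mem_basesOf_iff.mp hBb⟩
  · rw [mem_coe, hMΓ.mem_basesOf_iff, isBasisOf_gammaIndep_iff hM hB hdisj] at hG'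
    exact mem_filter.mpr ⟨hM.mem_basesOf_iff.mpr hG'.2, hsdiff G hG'.1⟩
  · exact ((isBasisOf_gammaIndep_iff hM hB hdisj).mp (hMΓ.mem_basesOf_iff.mp hG')).1

end Gamma

/-- The bases `B` of `Δ` with `B \ [d] = I` are counted by the bases of `Γ_I`,
and `h_j(Γ_I) ≤ C(|I| + j - 1, j)`. -/
theorem stmt_8 (n d : ℕ) (Indep : Finset ℕ → Prop)
    (hM : IsMatroidOn n Indep) (hB : IsBasisOf Indep (Finset.range d))
    (I : Finset ℕ) (hI : Indep I) (hdisj : Disjoint I (Finset.range d)) :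
    (@Finset.filter _ (fun B => B \ Finset.range d = I) (Classical.decPred _)
        (basesOf Indep n)).card = numBases (GammaIndep Indep d I) d ∧
    ∀ j, hVec (GammaIndep Indep d I) d j ≤ Nat.choose (I.card + j - 1) j := by
  refine ⟨by convert card_filter_basesOf_sdiff_eq hM hB hI hdisj, fun j => ?_⟩
  have hMΓ := hM.gammaIndep hI hdisj
  obtain ⟨G, hG⟩ := hMΓ.exists_isBasisOf
  have hrank := card_add_card_of_isBasisOf_gammaIndep hM hB hdisj hG
  rw [← Nat.multichoose_eq, show #I = d - #G by omega]
  exact hVec_le_multichoose hMΓ hG j
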